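/- arXiv:1205.4160 — 5 statements merged into one kernel-verified Lean document; each statement's English description precedes it below -/
import Mathlib

section
/- Let d ≥ 1, τ < T, and let f₁, f₂ : [τ,T] × ℝ^d → ℝ^d be jointly continuous. Suppose that for j = 1, 2 there are exponents p_i^j ≥ 2 (i = 1,…,d) and constants α^j, C₁^j, C₂^j > 0 such that for all t ∈ [τ,T] and all u ∈ ℝ^d: ∑_{i=1}^d |f_j^i(t,u)|^{p_i^j/(p_i^j−1)} ≤ C₁^j (1 + ∑_{i=1}^d |u^i|^{p_i^j}) and (f_j(t,u), u) ≥ α^j ∑_{i=1}^d |u^i|^{p_i^j} − C₂^j. If moreover f₁^i(t,u) ≥ f₂^i(t,u) for all t ∈ [τ,T], all u ∈ ℝ^d and all i, then p_i^1 = p_i^2 for every i = 1,…,d. -/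
/-!
Freeze the time at `t = τ` and test both fields on the ray `u = s eᵢ`, `s → ∞`. Dissipativity
of `f₂` gives `α s^{p²ᵢ} - C ≤ f₂ⁱ(u) s`, the comparison bounds this by `|f₁ⁱ(u)| s`, and the
growth condition of `f₁`, whose left side carries the conjugate exponent of `p¹ᵢ`, makes
`|f₁ⁱ(u)| = O(s^{p¹ᵢ - 1})`. Hence `s^{p²ᵢ} = O(s^{p¹ᵢ})`, i.e. `p²ᵢ ≤ p¹ᵢ`. The reflection
`f ↦ -f(t, -·)` preserves both conditions and reverses the comparison, which gives `p¹ᵢ ≤ p²ᵢ`.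
-/

open Filter Finset

lemma le_of_eventually_rpow_le_mul_rpow_add {α K C a b : ℝ} (hα : 0 < α) (ha : 0 < a)
    (h : ∀ᶠ s in atTop, α * s ^ a ≤ K * s ^ b + C) : a ≤ b := by
  by_contra! hba
  have hlim : Tendsto (fun s : ℝ => K * s ^ (-(a - b)) + C * s ^ (-a)) atTop (nhds 0) := by
    simpa using ((tendsto_rpow_neg_atTop (sub_pos.2 hba)).const_mul K).add
      ((tendsto_rpow_neg_atTop ha).const_mul C)
  have hle : ∀ᶠ s : ℝ in atTop, α ≤ K * s ^ (-(a - b)) + C * s ^ (-a) := by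
    filter_upwards [h, eventually_gt_atTop 0] with s hs hs0
    have hsa : 0 < s ^ a := Real.rpow_pos_of_pos hs0 a
    rw [Real.rpow_neg hs0.le, Real.rpow_neg hs0.le, Real.rpow_sub hs0, inv_div,
      ← mul_le_mul_iff_of_pos_right hsa]
    field_simp
    linarith
  linarith [ge_of_tendsto hlim hle]

lemma le_mul_rpow_inv_of_rpow_le {x y K q : ℝ} (hx : 0 ≤ x) (hy : 0 ≤ y) (hK : 0 ≤ K)
    (hq : 0 < q) (h : y ^ q ≤ K * x ^ q) : y ≤ K ^ q⁻¹ * x := by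
  rwa [← Real.rpow_le_rpow_iff hy (by positivity) hq, Real.mul_rpow (by positivity) hx,
    Real.rpow_inv_rpow hK hq.ne']

section Exponents

variable {ι : Type*} [Fintype ι]

def GrowthCondition (p : ι → ℝ) (C : ℝ) (g : EuclideanSpace ℝ ι → EuclideanSpace ℝ ι) :
    Prop :=
  ∀ u : EuclideanSpace ℝ ι, ∑ i, |g u i| ^ (p i / (p i - 1)) ≤ C * (1 + ∑ i, |u i| ^ p i)

def Dissipative (p : ι → ℝ) (α C : ℝ) (g : EuclideanSpace ℝ ι → EuclideanSpace ℝ ι) : Prop :=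
  ∀ u : EuclideanSpace ℝ ι, α * (∑ i, |u i| ^ p i) - C ≤ ∑ i, g u i * u i

variable {p : ι → ℝ} {α C : ℝ} {g : EuclideanSpace ℝ ι → EuclideanSpace ℝ ι}

lemma GrowthCondition.neg_comp_neg (hg : GrowthCondition p C g) :
    GrowthCondition p C fun u => -g (-u) := by
  intro u
  simpa using hg (-u)

lemma Dissipative.neg_comp_neg (hg : Dissipative p α C g) :
    Dissipative p α C fun u => -g (-u) := by
  intro u
  simpa using hg (-u)

variable [DecidableEq ι]

lemma sum_abs_single_rpow (i : ι) (c : ℝ) (hp : ∀ j, p j ≠ 0) :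
    ∑ j, |EuclideanSpace.single i c j| ^ p j = |c| ^ p i := by
  rw [Fintype.sum_eq_single i fun j hj => by simp [hj, Real.zero_rpow (hp j)]]
  simp

lemma sum_mul_single (v : EuclideanSpace ℝ ι) (i : ι) (c : ℝ) :
    ∑ j, v j * EuclideanSpace.single i c j = v i * c := by
  simp [PiLp.single_apply]

lemma Dissipative.le_apply_single_mul (hg : Dissipative p α C g) (hp : ∀ j, p j ≠ 0)
    (i : ι) (c : ℝ) : α * |c| ^ p i - C ≤ g (EuclideanSpace.single i c) i * c := by
  have := hg (EuclideanSpace.single i c)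
  rwa [sum_abs_single_rpow i c hp, sum_mul_single] at this

lemma GrowthCondition.exists_abs_apply_single_le (hg : GrowthCondition p C g)
    (hp : ∀ j, 1 < p j) (i : ι) :
    ∃ K, ∀ s, 1 ≤ s → |g (EuclideanSpace.single i s) i| ≤ K * s ^ (p i - 1) := by
  have hp₀ : 0 < p i - 1 := sub_pos.2 (hp i)
  set q := p i / (p i - 1)
  have hq : 0 < q := div_pos (by linarith) hp₀
  refine ⟨(2 * C) ^ q⁻¹, fun s hs => ?_⟩
  set u := EuclideanSpace.single i s
  have hs₀ : 0 ≤ s := by linarith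
  have hsp : 1 ≤ s ^ p i := Real.one_le_rpow hs (by linarith)
  have hbound : |g u i| ^ q ≤ C * (1 + s ^ p i) := by
    have := hg u
    rw [sum_abs_single_rpow i s fun j => by linarith [hp j], abs_of_nonneg hs₀] at this
    exact (single_le_sum (f := fun j => |g u j| ^ (p j / (p j - 1)))
      (fun j _ => by positivity) (mem_univ i)).trans this
  have hC : 0 ≤ C := nonneg_of_mul_nonneg_left ((by positivity : 0 ≤ |g u i| ^ q).trans hbound)
    (by positivity)
  refine le_mul_rpow_inv_of_rpow_le (by positivity) (abs_nonneg _) (by positivity) hq ?_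
  calc |g u i| ^ q ≤ C * (1 + s ^ p i) := hbound
    _ ≤ 2 * C * s ^ p i := by nlinarith
    _ = 2 * C * (s ^ (p i - 1)) ^ q := by
      rw [← Real.rpow_mul hs₀, mul_div_cancel₀ _ hp₀.ne']

lemma exponent_le_of_apply_le {q : ι → ℝ} {C₁ C₂ : ℝ}
    {g h : EuclideanSpace ℝ ι → EuclideanSpace ℝ ι}
    (hg : GrowthCondition p C₁ g) (hh : Dissipative q α C₂ h) (hα : 0 < α)
    (hp : ∀ j, 1 < p j) (hq : ∀ j, 0 < q j) (i : ι) (hgh : ∀ u, h u i ≤ g u i) :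
    q i ≤ p i := by
  obtain ⟨K, hK⟩ := hg.exists_abs_apply_single_le hp i
  refine le_of_eventually_rpow_le_mul_rpow_add hα (hq i) (K := K) (C := C₂) ?_
  filter_upwards [eventually_ge_atTop 1] with s hs
  have hs₀ : 0 < s := by linarith
  set u := EuclideanSpace.single i s
  calc α * s ^ q i ≤ h u i * s + C₂ := by
        have := hh.le_apply_single_mul (fun j => (hq j).ne') i s
        rw [abs_of_pos hs₀] at this
        linarith
    _ ≤ |g u i| * s + C₂ := by gcongr; exact (hgh u).trans (le_abs_self _)
    _ ≤ K * s ^ (p i - 1) * s + C₂ := by gcongr; exact hK s hs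
    _ = K * s ^ p i + C₂ := by rw [mul_assoc, ← Real.rpow_add_one hs₀.ne', sub_add_cancel]

end Exponents

theorem exponents_equal_of_comparison_general
    (d : ℕ) (τ T : ℝ) (hτT : τ < T)
    (f₁ f₂ : ℝ → EuclideanSpace ℝ (Fin d) → EuclideanSpace ℝ (Fin d))
    (p₁ p₂ : Fin d → ℝ) (hp₁ : ∀ i, 2 ≤ p₁ i) (hp₂ : ∀ i, 2 ≤ p₂ i)
    (α₁ C₁₁ C₂₁ α₂ C₁₂ C₂₂ : ℝ)
    (hα₁ : 0 < α₁)
    (hα₂ : 0 < α₂)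
    (hgrowth₁ : ∀ t ∈ Set.Icc τ T, ∀ u : EuclideanSpace ℝ (Fin d),
      ∑ i, |f₁ t u i| ^ (p₁ i / (p₁ i - 1)) ≤ C₁₁ * (1 + ∑ i, |u i| ^ (p₁ i)))
    (hgrowth₂ : ∀ t ∈ Set.Icc τ T, ∀ u : EuclideanSpace ℝ (Fin d),
      ∑ i, |f₂ t u i| ^ (p₂ i / (p₂ i - 1)) ≤ C₁₂ * (1 + ∑ i, |u i| ^ (p₂ i)))
    (hdiss₁ : ∀ t ∈ Set.Icc τ T, ∀ u : EuclideanSpace ℝ (Fin d),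
      α₁ * (∑ i, |u i| ^ (p₁ i)) - C₂₁ ≤ ∑ i, f₁ t u i * u i)
    (hdiss₂ : ∀ t ∈ Set.Icc τ T, ∀ u : EuclideanSpace ℝ (Fin d),
      α₂ * (∑ i, |u i| ^ (p₂ i)) - C₂₂ ≤ ∑ i, f₂ t u i * u i)
    (hcomp : ∀ t ∈ Set.Icc τ T, ∀ u : EuclideanSpace ℝ (Fin d), ∀ i, f₂ t u i ≤ f₁ t u i) :
    ∀ i, p₁ i = p₂ i := by
  intro i
  have hτ : τ ∈ Set.Icc τ T := ⟨le_rfl, hτT.le⟩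
  have hg₁ : GrowthCondition p₁ C₁₁ (f₁ τ) := hgrowth₁ τ hτ
  have hg₂ : GrowthCondition p₂ C₁₂ (f₂ τ) := hgrowth₂ τ hτ
  have hd₁ : Dissipative p₁ α₁ C₂₁ (f₁ τ) := hdiss₁ τ hτ
  have hd₂ : Dissipative p₂ α₂ C₂₂ (f₂ τ) := hdiss₂ τ hτ
  have hp₁' : ∀ j, 1 < p₁ j := fun j => by linarith [hp₁ j]
  have hp₂' : ∀ j, 1 < p₂ j := fun j => by linarith [hp₂ j]
  refine le_antisymm ?_ ?_
  · exact exponent_le_of_apply_le hg₂.neg_comp_neg hd₁.neg_comp_neg hα₁ hp₂'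
      (fun j => by linarith [hp₁ j]) i fun u => neg_le_neg (hcomp τ hτ (-u) i)
  · exact exponent_le_of_apply_le hg₁ hd₂ hα₂ hp₁' (fun j => by linarith [hp₂ j]) i
      fun u => hcomp τ hτ u i

/-- If `f₁, f₂ : [τ,T] × ℝ^d → ℝ^d` are jointly continuous, each satisfying
the growth and dissipativity conditions with exponents `p₁ i, p₂ i ≥ 2` and positive
constants, and `f₁^i(t,u) ≥ f₂^i(t,u)` everywhere, then `p₁ i = p₂ i` for all `i`. -/
theorem exponents_equal_of_comparison
    (d : ℕ) (hd : 1 ≤ d) (τ T : ℝ) (hτT : τ < T)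
    (f₁ f₂ : ℝ → EuclideanSpace ℝ (Fin d) → EuclideanSpace ℝ (Fin d))
    (hf₁cont : ContinuousOn (Function.uncurry f₁) (Set.Icc τ T ×ˢ Set.univ))
    (hf₂cont : ContinuousOn (Function.uncurry f₂) (Set.Icc τ T ×ˢ Set.univ))
    (p₁ p₂ : Fin d → ℝ) (hp₁ : ∀ i, 2 ≤ p₁ i) (hp₂ : ∀ i, 2 ≤ p₂ i)
    (α₁ C₁₁ C₂₁ α₂ C₁₂ C₂₂ : ℝ)
    (hα₁ : 0 < α₁) (hC₁₁ : 0 < C₁₁) (hC₂₁ : 0 < C₂₁)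
    (hα₂ : 0 < α₂) (hC₁₂ : 0 < C₁₂) (hC₂₂ : 0 < C₂₂)
    (hgrowth₁ : ∀ t ∈ Set.Icc τ T, ∀ u : EuclideanSpace ℝ (Fin d),
      ∑ i, |f₁ t u i| ^ (p₁ i / (p₁ i - 1)) ≤ C₁₁ * (1 + ∑ i, |u i| ^ (p₁ i)))
    (hgrowth₂ : ∀ t ∈ Set.Icc τ T, ∀ u : EuclideanSpace ℝ (Fin d),
      ∑ i, |f₂ t u i| ^ (p₂ i / (p₂ i - 1)) ≤ C₁₂ * (1 + ∑ i, |u i| ^ (p₂ i)))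
    (hdiss₁ : ∀ t ∈ Set.Icc τ T, ∀ u : EuclideanSpace ℝ (Fin d),
      α₁ * (∑ i, |u i| ^ (p₁ i)) - C₂₁ ≤ ∑ i, f₁ t u i * u i)
    (hdiss₂ : ∀ t ∈ Set.Icc τ T, ∀ u : EuclideanSpace ℝ (Fin d),
      α₂ * (∑ i, |u i| ^ (p₂ i)) - C₂₂ ≤ ∑ i, f₂ t u i * u i)
    (hcomp : ∀ t ∈ Set.Icc τ T, ∀ u : EuclideanSpace ℝ (Fin d), ∀ i, f₂ t u i ≤ f₁ t u i) :
    ∀ i, p₁ i = p₂ i :=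
  exponents_equal_of_comparison_general d τ T hτT f₁ f₂ p₁ p₂ hp₁ hp₂ α₁ C₁₁ C₂₁ α₂ C₁₂ C₂₂ hα₁ hα₂
    hgrowth₁ hgrowth₂ hdiss₁ hdiss₂ hcomp
end

section
/- Let f : [τ,T]×ℝ^d → ℝ^d be jointly continuous, let p_i ≥ 2 and C₁, C₂, α > 0, and suppose that for all t ∈ [τ,T] and all u ∈ ℝ₊^d: ∑_{i=1}^d |f^i(t,u)|^{p_i/(p_i−1)} ≤ C₁(1 + ∑_{i=1}^d |u^i|^{p_i}) and (f(t,u),u) ≥ α ∑_{i=1}^d |u^i|^{p_i} − C₂. For each n ≥ 1 define f_n^i(t,u) = ψ_n(|u|) f^i(t,u) + (1 − ψ_n(|u|)) g^i(t,u), where g^i(t,u) = |u^i|^{p_i−2} u^i + f^i(t,0,…,0). Then there exist constants D₁, D₂, γ > 0, depending only on d, the p_i, C₁, C₂ and α (and not on n), such that for all n ≥ 1, all t ∈ [τ,T] and all u ∈ ℝ₊^d: ∑_{i=1}^d |f_n^i(t,u)|^{p_i/(p_i−1)} ≤ D₁(1 + ∑_{i=1}^d |u^i|^{p_i}) and (f_n(t,u),u)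 ≥ γ ∑_{i=1}^d |u^i|^{p_i} − D₂. -/
/-- Young's inequality with an ε = 1/2 on the `x^P` term. -/
private lemma young_eps {P Q c x : ℝ} (hpq : P.HolderConjugate Q) (hP : 2 ≤ P)
    (hc : 0 ≤ c) (hx : 0 ≤ x) : c * x ≤ 2 * c ^ Q + x ^ P / 2 := by
  have hP0 : 0 < P := hpq.pos
  have hQ1 : 1 < Q := hpq.symm.lt
  have hQ2 : Q ≤ 2 := by
    rw [hpq.conjugate_eq, div_le_iff₀ (by linarith)]; linarith
  have hQleP : Q ≤ P := le_trans hQ2 hP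
  set k : ℝ := (2 : ℝ) ^ (1 / P) with hk
  have hk0 : 0 < k := Real.rpow_pos_of_pos (by norm_num) _
  have hkP : k ^ P = 2 := by
    rw [hk, ← Real.rpow_mul (by norm_num : (0:ℝ) ≤ 2), one_div_mul_cancel hP0.ne',
      Real.rpow_one]
  have hkQ : k ^ Q ≤ 2 := by
    rw [hk, ← Real.rpow_mul (by norm_num : (0:ℝ) ≤ 2)]
    calc (2:ℝ) ^ (1 / P * Q) ≤ 2 ^ (1:ℝ) :=
          Real.rpow_le_rpow_of_exponent_le (by norm_num)
            (by rw [div_mul_eq_mul_div, one_mul, div_le_one hP0]; exact hQleP)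
      _ = 2 := Real.rpow_one 2
  have hy := Real.young_inequality_of_nonneg (div_nonneg hx hk0.le)
    (mul_nonneg hc hk0.le) hpq
  have heq : x / k * (c * k) = c * x := by field_simp
  rw [heq] at hy
  have h1 : (x / k) ^ P / P ≤ x ^ P / 2 := by
    rw [Real.div_rpow hx hk0.le, hkP, div_div]
    have hxP : (0:ℝ) ≤ x ^ P := Real.rpow_nonneg hx _
    have : (2:ℝ) ≤ 2 * P := by nlinarith
    exact div_le_div_of_nonneg_left hxP (by norm_num) this
  have h2 : (c * k) ^ Q / Q ≤ 2 * c ^ Q := by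
    have hcQ : (0:ℝ) ≤ c ^ Q := Real.rpow_nonneg hc _
    have e : (c * k) ^ Q = c ^ Q * k ^ Q := Real.mul_rpow hc hk0.le
    calc (c * k) ^ Q / Q ≤ (c * k) ^ Q / 1 := by
          apply div_le_div_of_nonneg_left _ one_pos hQ1.le
          rw [e]; positivity
      _ = c ^ Q * k ^ Q := by rw [div_one, e]
      _ ≤ c ^ Q * 2 := mul_le_mul_of_nonneg_left hkQ hcQ
      _ = 2 * c ^ Q := by ring
  linarith

/-- Three-term convexity inequality for rpow with exponent in `[1,2]`. -/
private lemma rpow_add3_le {a b c q : ℝ} (ha : 0 ≤ a) (hb : 0 ≤ b) (hc : 0 ≤ c)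
    (hq1 : 1 ≤ q) (hq2 : q ≤ 2) : (a + b + c) ^ q ≤ 3 * (a ^ q + b ^ q + c ^ q) := by
  have h := Real.rpow_arith_mean_le_arith_mean_rpow (Finset.univ : Finset (Fin 3))
    ![1/3, 1/3, 1/3] ![3*a, 3*b, 3*c]
    (by intro i _; fin_cases i <;> norm_num)
    (by simp [Fin.sum_univ_three]; norm_num)
    (by intro i _; fin_cases i <;> simp <;> positivity) hq1
  simp only [Fin.sum_univ_three, Matrix.cons_val_zero, Matrix.cons_val_one, Matrix.head_cons,
    Matrix.cons_val_two, Matrix.tail_cons] at h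
  have e1 : 1/3*(3*a) + 1/3*(3*b) + 1/3*(3*c) = a + b + c := by ring
  rw [e1] at h
  have key : ∀ x : ℝ, 0 ≤ x → 1/3 * (3*x) ^ q ≤ 3 * x ^ q := by
    intro x hx
    rw [Real.mul_rpow (by norm_num : (0:ℝ) ≤ 3) hx]
    have h3 : (3:ℝ) ^ q ≤ 9 := by
      calc (3:ℝ) ^ q ≤ 3 ^ (2:ℝ) := Real.rpow_le_rpow_of_exponent_le (by norm_num) hq2
        _ = 9 := by
            rw [show (2:ℝ) = ((2:ℕ):ℝ) by norm_num, Real.rpow_natCast]; norm_num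
    nlinarith [Real.rpow_nonneg hx q]
  linarith [key a ha, key b hb, key c hc]

/-- For `x ≥ 0` and `P ≥ 2`, `x^(P-2) * x = x^(P-1)`. -/
private lemma rpow_sub_two_mul {x P : ℝ} (hx : 0 ≤ x) (hP : 2 ≤ P) :
    x ^ (P - 2) * x = x ^ (P - 1) := by
  rcases eq_or_lt_of_le hx with h | h
  · rw [← h, mul_zero, Real.zero_rpow (by linarith : P - 1 ≠ 0)]
  · calc x ^ (P-2) * x = x ^ (P-2) * x ^ (1:ℝ) := by rw [Real.rpow_one]
      _ = x ^ (P-2+1) := (Real.rpow_add h _ _).symm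
      _ = x ^ (P-1) := by ring_nf

/-- For `x ≥ 0` and `P ≥ 2`, `x^(P-1) * x = x^P`. -/
private lemma rpow_sub_one_mul {x P : ℝ} (hx : 0 ≤ x) (hP : 2 ≤ P) :
    x ^ (P - 1) * x = x ^ P := by
  rcases eq_or_lt_of_le hx with h | h
  · rw [← h, mul_zero, Real.zero_rpow (by linarith : P ≠ 0)]
  · calc x ^ (P-1) * x = x ^ (P-1) * x ^ (1:ℝ) := by rw [Real.rpow_one]
      _ = x ^ (P-1+1) := (Real.rpow_add h _ _).symm
      _ = x ^ P := by ring_nf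

/-- For `x ≥ 0` and `P ≥ 2`, `(x^(P-1))^(P/(P-1)) = x^P`. -/
private lemma rpow_sub_one_rpow {x P : ℝ} (hx : 0 ≤ x) (hP : 2 ≤ P) :
    (x ^ (P - 1)) ^ (P / (P - 1)) = x ^ P := by
  rw [← Real.rpow_mul hx]
  congr 1
  have h1 : P - 1 ≠ 0 := by linarith
  field_simp

/-- The truncated approximation
`fₙ^i(t,u) = ψ_n(|u|) f^i(t,u) + (1 − ψ_n(|u|)) (|u^i|^{p_i−2} u^i + f^i(t,0))`. -/
noncomputable def approxFn (d : ℕ) (p : Fin d → ℝ) (ψ : ℕ → ℝ → ℝ)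
    (f : ℝ → EuclideanSpace ℝ (Fin d) → EuclideanSpace ℝ (Fin d))
    (n : ℕ) (t : ℝ) (u : EuclideanSpace ℝ (Fin d)) : EuclideanSpace ℝ (Fin d) :=
  WithLp.toLp 2 (fun i => ψ n ‖u‖ * f t u i + (1 - ψ n ‖u‖) * (|u i| ^ (p i - 2) * u i + f t 0 i))

/-- the approximations `fₙ` satisfy the growth and dissipativity conditions on
the positive cone with constants `D₁, D₂, γ > 0` independent of `n`. -/
theorem approxFn_growth_dissipativity
    (d : ℕ) (hd : 1 ≤ d) (τ T : ℝ) (hτT : τ < T)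
    (f : ℝ → EuclideanSpace ℝ (Fin d) → EuclideanSpace ℝ (Fin d))
    (hfcont : ContinuousOn (Function.uncurry f) (Set.Icc τ T ×ˢ Set.univ))
    (p : Fin d → ℝ) (hp : ∀ i, 2 ≤ p i)
    (C₁ C₂ α : ℝ) (hC₁ : 0 < C₁) (hC₂ : 0 < C₂) (hα : 0 < α)
    (hgrowth : ∀ t ∈ Set.Icc τ T, ∀ u : EuclideanSpace ℝ (Fin d), (∀ i, 0 ≤ u i) →
      ∑ i, |f t u i| ^ (p i / (p i - 1)) ≤ C₁ * (1 + ∑ i, |u i| ^ (p i)))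
    (hdiss : ∀ t ∈ Set.Icc τ T, ∀ u : EuclideanSpace ℝ (Fin d), (∀ i, 0 ≤ u i) →
      α * (∑ i, |u i| ^ (p i)) - C₂ ≤ ∑ i, f t u i * u i)
    (ψ : ℕ → ℝ → ℝ)
    (hψsmooth : ∀ n, ContDiff ℝ (⊤ : ℕ∞) (ψ n))
    (hψrange : ∀ n s, ψ n s ∈ Set.Icc (0 : ℝ) 1)
    (hψone : ∀ n : ℕ, ∀ s : ℝ, 0 ≤ s → s ≤ (n : ℝ) → ψ n s = 1)
    (hψzero : ∀ n : ℕ, ∀ s : ℝ, (n : ℝ) + 1 ≤ s → ψ n s = 0) :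
    ∃ D₁ D₂ γ : ℝ, 0 < D₁ ∧ 0 < D₂ ∧ 0 < γ ∧
      ∀ n : ℕ, 1 ≤ n → ∀ t ∈ Set.Icc τ T, ∀ u : EuclideanSpace ℝ (Fin d), (∀ i, 0 ≤ u i) →
        (∑ i, |approxFn d p ψ f n t u i| ^ (p i / (p i - 1))
            ≤ D₁ * (1 + ∑ i, |u i| ^ (p i))) ∧
        (γ * (∑ i, |u i| ^ (p i)) - D₂ ≤ ∑ i, approxFn d p ψ f n t u i * u i) := by
  refine ⟨6*C₁+3, C₂+2*C₁, min α 2⁻¹, by positivity, by positivity,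
    lt_min hα (by norm_num), ?_⟩
  intro n hn t ht u hu
  -- basic facts about the exponents
  have hp1 : ∀ i, (1:ℝ) < p i := fun i => lt_of_lt_of_le one_lt_two (hp i)
  have hconj : ∀ i, (p i).HolderConjugate (p i / (p i - 1)) := fun i =>
    Real.HolderConjugate.conjExponent (hp1 i)
  have hq1 : ∀ i, (1:ℝ) ≤ p i / (p i - 1) := fun i => (hconj i).symm.lt.le
  have hq2 : ∀ i, p i / (p i - 1) ≤ 2 := by
    intro i
    rw [div_le_iff₀ (by have := hp i; linarith)]
    have := hp i; linarith
  set θ := ψ n ‖u‖ with hθdef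
  obtain ⟨hθ0, hθ1⟩ := hψrange n ‖u‖
  set S := ∑ i, u i ^ (p i) with hSdef
  have hSi : ∀ i, (0:ℝ) ≤ u i ^ p i := fun i => Real.rpow_nonneg (hu i) _
  have hS0 : 0 ≤ S := Finset.sum_nonneg fun i _ => hSi i
  have hSeq : ∑ i, |u i| ^ (p i) = S := by
    exact Finset.sum_congr rfl fun i _ => by rw [abs_of_nonneg (hu i)]
  -- bound on f at 0
  have h0 : ∑ i, |f t 0 i| ^ (p i / (p i - 1)) ≤ C₁ := by
    have h := hgrowth t ht 0 (fun i => le_refl 0)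
    have h00 : ∑ i, |(0 : EuclideanSpace ℝ (Fin d)) i| ^ (p i) = 0 :=
      Finset.sum_eq_zero fun i _ => by
        show |(0:ℝ)| ^ (p i) = 0
        rw [abs_zero, Real.zero_rpow (by have := hp i; intro hc; rw [hc] at this; linarith)]
    rw [h00] at h
    linarith
  have hfneq : ∀ i, approxFn d p ψ f n t u i
      = θ * f t u i + (1 - θ) * (|u i| ^ (p i - 2) * u i + f t 0 i) := fun i => rfl
  have hbi : ∀ i, |u i| ^ (p i - 2) * u i = u i ^ (p i - 1) := fun i => by
    rw [abs_of_nonneg (hu i)]; exact rpow_sub_two_mul (hu i) (hp i)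
  constructor
  · -- growth bound
    have key : ∀ i, |approxFn d p ψ f n t u i| ^ (p i / (p i - 1))
        ≤ 3 * (|f t u i| ^ (p i / (p i-1)) + u i ^ (p i) + |f t 0 i| ^ (p i / (p i-1))) := by
      intro i
      have hB : (0:ℝ) ≤ u i ^ (p i - 1) := Real.rpow_nonneg (hu i) _
      have habs : |approxFn d p ψ f n t u i|
          ≤ |f t u i| + u i ^ (p i - 1) + |f t 0 i| := by
        rw [hfneq i, hbi i]
        calc |θ * f t u i + (1 - θ) * (u i ^ (p i - 1) + f t 0 i)|
            ≤ |θ * f t u i| + |(1 - θ) * (u i ^ (p i - 1) + f t 0 i)| := abs_add_le _ _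
          _ = θ * |f t u i| + (1-θ) * |u i ^ (p i - 1) + f t 0 i| := by
              rw [abs_mul, abs_mul, abs_of_nonneg hθ0, abs_of_nonneg (by linarith : (0:ℝ) ≤ 1-θ)]
          _ ≤ 1 * |f t u i| + 1 * (|u i ^ (p i - 1)| + |f t 0 i|) := by
              have := abs_add_le (u i ^ (p i - 1)) (f t 0 i)
              have h1 : θ * |f t u i| ≤ 1 * |f t u i| :=
                mul_le_mul_of_nonneg_right hθ1 (abs_nonneg _)
              have h2 : (1-θ) * |u i ^ (p i - 1) + f t 0 i|
                  ≤ 1 * (|u i ^ (p i - 1)| + |f t 0 i|) := by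
                apply mul_le_mul (by linarith) this (abs_nonneg _) (by norm_num)
              linarith
          _ = |f t u i| + u i ^ (p i - 1) + |f t 0 i| := by
              rw [abs_of_nonneg hB]; ring
      have h1 : |approxFn d p ψ f n t u i| ^ (p i / (p i - 1))
          ≤ (|f t u i| + u i ^ (p i - 1) + |f t 0 i|) ^ (p i / (p i - 1)) :=
        Real.rpow_le_rpow (abs_nonneg _) habs (by linarith [hq1 i])
      have h2 := rpow_add3_le (abs_nonneg (f t u i)) hB (abs_nonneg (f t 0 i))
        (hq1 i) (hq2 i)
      have h3 : (u i ^ (p i - 1)) ^ (p i / (p i - 1)) = u i ^ (p i) :=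
        rpow_sub_one_rpow (hu i) (hp i)
      rw [h3] at h2
      linarith
    have hsum : ∑ i, |approxFn d p ψ f n t u i| ^ (p i / (p i - 1))
        ≤ 3 * ((∑ i, |f t u i| ^ (p i / (p i-1))) + S + ∑ i, |f t 0 i| ^ (p i / (p i-1))) := by
      calc ∑ i, |approxFn d p ψ f n t u i| ^ (p i / (p i - 1))
          ≤ ∑ i, 3 * (|f t u i| ^ (p i / (p i-1)) + u i ^ (p i)
              + |f t 0 i| ^ (p i / (p i-1))) := Finset.sum_le_sum fun i _ => key i
        _ = 3 * ((∑ i, |f t u i| ^ (p i / (p i-1))) + S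
              + ∑ i, |f t 0 i| ^ (p i / (p i-1))) := by
            rw [← Finset.mul_sum]
            congr 1
            rw [Finset.sum_add_distrib, Finset.sum_add_distrib]
    have hg := hgrowth t ht u hu
    rw [hSeq] at hg
    rw [hSeq]
    nlinarith [hC₁.le, hS0, mul_nonneg hC₁.le hS0]
  · -- dissipativity bound
    have hpt : ∀ i, approxFn d p ψ f n t u i * u i
        = θ * (f t u i * u i) + (1-θ) * (u i ^ (p i)) + (1-θ) * (f t 0 i * u i) := by
      intro i
      rw [hfneq i, hbi i]
      have : u i ^ (p i - 1) * u i = u i ^ (p i) := rpow_sub_one_mul (hu i) (hp i)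
      rw [← this]; ring
    have hsum : ∑ i, approxFn d p ψ f n t u i * u i
        = θ * (∑ i, f t u i * u i) + (1-θ) * S + (1-θ) * ∑ i, f t 0 i * u i := by
      simp only [hpt]
      rw [Finset.sum_add_distrib, Finset.sum_add_distrib, ← Finset.mul_sum,
        ← Finset.mul_sum, ← Finset.mul_sum, hSdef]
    have hF := hdiss t ht u hu
    rw [hSeq] at hF
    have hG : -(S/2) - 2*C₁ ≤ ∑ i, f t 0 i * u i := by
      have perterm : ∀ i, -(2 * |f t 0 i| ^ (p i / (p i - 1)) + u i ^ (p i) / 2)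
          ≤ f t 0 i * u i := by
        intro i
        have hy := young_eps (hconj i) (hp i) (abs_nonneg (f t 0 i)) (hu i)
        have habs : -( |f t 0 i| * u i) ≤ f t 0 i * u i := by
          have h1 : |f t 0 i * u i| = |f t 0 i| * u i := by
            rw [abs_mul, abs_of_nonneg (hu i)]
          have h2 := neg_abs_le (f t 0 i * u i)
          rw [h1] at h2; exact h2
        linarith
      have hsum2 : ∑ i, -(2 * |f t 0 i| ^ (p i / (p i - 1)) + u i ^ (p i) / 2)
          = -(2 * ∑ i, |f t 0 i| ^ (p i / (p i - 1))) - S/2 := by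
        rw [Finset.sum_neg_distrib, Finset.sum_add_distrib, ← Finset.mul_sum,
          ← Finset.sum_div, ← hSdef]
        ring
      have h3 := Finset.sum_le_sum fun i (_ : i ∈ Finset.univ) => perterm i
      rw [hsum2] at h3
      linarith
    rw [hSeq, hsum]
    have e1 : θ * (α*S - C₂) ≤ θ * (∑ i, f t u i * u i) :=
      mul_le_mul_of_nonneg_left hF hθ0
    have e2 : (1-θ) * (-(S/2) - 2*C₁) ≤ (1-θ) * (∑ i, f t 0 i * u i) :=
      mul_le_mul_of_nonneg_left hG (by linarith)
    have hγa : min α 2⁻¹ ≤ α := min_le_left _ _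
    have hγb : min α 2⁻¹ ≤ 2⁻¹ := min_le_right _ _
    nlinarith [mul_nonneg (mul_nonneg hθ0 (sub_nonneg.2 hγa)) hS0,
      mul_nonneg (mul_nonneg (by linarith : (0:ℝ) ≤ 1-θ)
        (by linarith : (0:ℝ) ≤ 2⁻¹ - min α 2⁻¹)) hS0,
      mul_nonneg hθ0 hC₁.le, mul_nonneg (by linarith : (0:ℝ) ≤ 1-θ) hC₂.le]
end

section
/- Let b : [τ,T]×ℝ^d → ℝ^d be jointly continuous, let p_i ≥ 2 and D₁, D₂, γ > 0, and suppose that ∑_{i=1}^d |b^i(t,u)|^{p_i/(p_i−1)} ≤ D₁(1 + ∑_{i=1}^d |u^i|^{p_i}) and (b(t,u),u) ≥ γ ∑_{i=1}^d |u^i|^{p_i} − D₂ hold for all t ∈ [τ,T] and all u ∈ ℝ^d whose Euclidean distance to ℝ₊^d is at most 1. Let 0 < ε < 1, let ρ_ε be a mollifier, let 0 < δ < 1 and let p be a positive integer, and define F^i(t,u) = ∫_{ℝ^d} ρ_ε(s) b^i(t, u − s) ds − pδ. Then there exist constants D₃, D₄, ν > 0, depending only on d, the p_i, D₁, D₂,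 γ and p (and not on ε, δ or the particular mollifier), such that for all t ∈ [τ,T] and all u ∈ ℝ₊^d: ∑_{i=1}^d |F^i(t,u)|^{p_i/(p_i−1)} ≤ D₃(1 + ∑_{i=1}^d |u^i|^{p_i}) and (F(t,u),u) ≥ ν ∑_{i=1}^d |u^i|^{p_i} − D₄. -/
open MeasureTheory

lemma aux_abs_apply_le_norm {d : ℕ} (x : EuclideanSpace ℝ (Fin d)) (i : Fin d) :
    |x i| ≤ ‖x‖ := by
  rw [EuclideanSpace.norm_eq, ← Real.sqrt_sq_eq_abs]
  apply Real.sqrt_le_sqrt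
  have := Finset.single_le_sum (f := fun j => ‖x j‖ ^ 2)
    (fun j _ => by positivity) (Finset.mem_univ i)
  simpa [Real.norm_eq_abs, sq_abs] using this

lemma aux_rpow_add (x y q : ℝ) (hx : 0 ≤ x) (hy : 0 ≤ y) (hq : 0 ≤ q) :
    (x + y) ^ q ≤ 2 ^ q * (x ^ q + y ^ q) := by
  have hM : (0:ℝ) ≤ max x y := le_max_of_le_left hx
  have h1 : (x + y) ^ q ≤ (2 * max x y) ^ q := by
    apply Real.rpow_le_rpow (by positivity) _ hq
    rw [two_mul]
    exact add_le_add (le_max_left x y) (le_max_right x y)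
  have h2 : (2 * max x y) ^ q = 2 ^ q * (max x y) ^ q :=
    Real.mul_rpow (by norm_num) hM
  have h3 : (max x y) ^ q ≤ x ^ q + y ^ q := by
    rcases max_cases x y with ⟨he, _⟩ | ⟨he, _⟩ <;> rw [he]
    · exact le_add_of_nonneg_right (Real.rpow_nonneg hy q)
    · exact le_add_of_nonneg_left (Real.rpow_nonneg hx q)
  calc (x + y) ^ q ≤ (2 * max x y) ^ q := h1
    _ = 2 ^ q * (max x y) ^ q := h2
    _ ≤ 2 ^ q * (x ^ q + y ^ q) := by
        apply mul_le_mul_of_nonneg_left h3 (by positivity)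

lemma aux_rpow_le_one_add (x θ : ℝ) (hx : 0 ≤ x) (hθ0 : 0 ≤ θ) (hθ1 : θ ≤ 1) :
    x ^ θ ≤ 1 + x := by
  rcases le_or_gt x 1 with h | h
  · have : x ^ θ ≤ 1 := Real.rpow_le_one hx h hθ0
    linarith
  · have : x ^ θ ≤ x ^ (1:ℝ) := Real.rpow_le_rpow_of_exponent_le h.le hθ1
    rw [Real.rpow_one] at this
    linarith

lemma aux_young (a θ lam : ℝ) (ha : 0 ≤ a) (hθ0 : 0 ≤ θ) (hθ1 : θ ≤ 1) (hlam : 0 < lam) :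
    a ^ θ ≤ lam ^ θ + lam ^ (θ - 1) * a := by
  have h1 : a ^ θ = lam ^ θ * (a / lam) ^ θ := by
    rw [← Real.mul_rpow hlam.le (by positivity)]
    rw [mul_div_cancel₀ _ hlam.ne']
  rw [h1]
  have h2 : (a / lam) ^ θ ≤ 1 + a / lam :=
    aux_rpow_le_one_add _ _ (by positivity) hθ0 hθ1
  have h3 : lam ^ θ * (a / lam) ^ θ ≤ lam ^ θ * (1 + a / lam) :=
    mul_le_mul_of_nonneg_left h2 (Real.rpow_nonneg hlam.le θ)
  refine h3.trans_eq ?_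
  rw [mul_add, mul_one, Real.rpow_sub hlam, Real.rpow_one]
  ring

lemma aux_lam_bound (A P lam : ℝ) (hA : 0 < A) (hP : 1 ≤ P) (hlam : max 1 (A ^ P) ≤ lam) :
    lam ^ (-P⁻¹) ≤ A⁻¹ := by
  have hP0 : (0:ℝ) < P := lt_of_lt_of_le one_pos hP
  have hlam1 : (1:ℝ) ≤ lam := le_trans (le_max_left _ _) hlam
  have hlam0 : (0:ℝ) < lam := lt_of_lt_of_le one_pos hlam1
  have h1 : A ≤ lam ^ P⁻¹ := by
    have h2 : (A ^ P) ^ P⁻¹ ≤ lam ^ P⁻¹ :=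
      Real.rpow_le_rpow (by positivity) (le_trans (le_max_right _ _) hlam) (by positivity)
    rwa [← Real.rpow_mul hA.le, mul_inv_cancel₀ hP0.ne', Real.rpow_one] at h2
  rw [Real.rpow_neg hlam0.le]
  exact inv_anti₀ hA h1

lemma aux_cont {d : ℕ} {τ T : ℝ}
    (b : ℝ → EuclideanSpace ℝ (Fin d) → EuclideanSpace ℝ (Fin d))
    (hbcont : ContinuousOn (Function.uncurry b) (Set.Icc τ T ×ˢ Set.univ))
    {t : ℝ} (ht : t ∈ Set.Icc τ T) (u : EuclideanSpace ℝ (Fin d)) (i : Fin d) :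
    Continuous (fun s : EuclideanSpace ℝ (Fin d) => b t (u - s) i) := by
  have hφ : Continuous (fun s : EuclideanSpace ℝ (Fin d) => (t, u - s)) :=
    (continuous_const.prodMk (continuous_const.sub continuous_id))
  have h1 : Continuous (fun s : EuclideanSpace ℝ (Fin d) => b t (u - s)) := by
    have := hbcont.comp (hφ.continuousOn (s := Set.univ)) (fun s _ => ⟨ht, trivial⟩)
    rw [← continuousOn_univ]
    exact this
  exact (continuous_apply i).comp ((PiLp.continuous_ofLp 2 _).comp h1)

lemma aux_integrable {d : ℕ} (ρ : EuclideanSpace ℝ (Fin d) → ℝ)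
    (hρc : Continuous ρ) (hρcs : HasCompactSupport ρ)
    (g : EuclideanSpace ℝ (Fin d) → ℝ) (hg : Continuous g) :
    Integrable (fun s => ρ s * g s) := by
  apply Continuous.integrable_of_hasCompactSupport (hρc.mul hg)
  exact hρcs.mul_right

set_option maxHeartbeats 1000000 in
/-- if `b` satisfies the growth and dissipativity conditions for all `u`
within Euclidean distance `1` of the positive cone, then the mollified and shifted
function `F^i(t,u) = ∫ ρ_ε(s) b^i(t,u−s) ds − mδ` satisfies them on the positive cone,
with constants independent of `ε`, `δ` and the mollifier. -/
theorem mollified_growth_dissipativity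
    (d : ℕ) (hd : 1 ≤ d) (τ T : ℝ) (hτT : τ < T)
    (b : ℝ → EuclideanSpace ℝ (Fin d) → EuclideanSpace ℝ (Fin d))
    (hbcont : ContinuousOn (Function.uncurry b) (Set.Icc τ T ×ˢ Set.univ))
    (p : Fin d → ℝ) (hp : ∀ i, 2 ≤ p i)
    (D₁ D₂ γ : ℝ) (hD₁ : 0 < D₁) (hD₂ : 0 < D₂) (hγ : 0 < γ)
    (hgrowth : ∀ t ∈ Set.Icc τ T, ∀ u : EuclideanSpace ℝ (Fin d),
      Metric.infDist u {v : EuclideanSpace ℝ (Fin d) | ∀ i, 0 ≤ v i} ≤ 1 →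
      ∑ i, |b t u i| ^ (p i / (p i - 1)) ≤ D₁ * (1 + ∑ i, |u i| ^ (p i)))
    (hdiss : ∀ t ∈ Set.Icc τ T, ∀ u : EuclideanSpace ℝ (Fin d),
      Metric.infDist u {v : EuclideanSpace ℝ (Fin d) | ∀ i, 0 ≤ v i} ≤ 1 →
      γ * (∑ i, |u i| ^ (p i)) - D₂ ≤ ∑ i, b t u i * u i)
    (m : ℕ) (hm : 1 ≤ m) :
    ∃ D₃ D₄ ν : ℝ, 0 < D₃ ∧ 0 < D₄ ∧ 0 < ν ∧
      ∀ ε ∈ Set.Ioo (0 : ℝ) 1, ∀ δ ∈ Set.Ioo (0 : ℝ) 1,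
      ∀ ρ : EuclideanSpace ℝ (Fin d) → ℝ,
        ContDiff ℝ (⊤ : ℕ∞) ρ → HasCompactSupport ρ → (∀ s, 0 ≤ ρ s) →
        (Function.support ρ ⊆ Metric.ball 0 ε) → (∫ s, ρ s = 1) →
      ∀ t ∈ Set.Icc τ T, ∀ u : EuclideanSpace ℝ (Fin d), (∀ i, 0 ≤ u i) →
        (∑ i, |(∫ s, ρ s * b t (u - s) i) - (m : ℝ) * δ| ^ (p i / (p i - 1))
            ≤ D₃ * (1 + ∑ i, |u i| ^ (p i))) ∧
        (ν * (∑ i, |u i| ^ (p i)) - D₄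
            ≤ ∑ i, ((∫ s, ρ s * b t (u - s) i) - (m : ℝ) * δ) * u i) := by
  have hd1 : (1:ℝ) ≤ d := by exact_mod_cast hd
  have hd0 : (0:ℝ) < d := lt_of_lt_of_le one_pos hd1
  have hm1 : (1:ℝ) ≤ m := by exact_mod_cast hm
  have hm0 : (0:ℝ) < m := lt_of_lt_of_le one_pos hm1
  have hpi : ∀ i, (0:ℝ) < p i := fun i => lt_of_lt_of_le two_pos (hp i)
  have hpi1 : ∀ i, (1:ℝ) < p i := fun i => lt_of_lt_of_le one_lt_two (hp i)
  set P : ℝ := ∑ i, p i with hPdef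
  have hPle : ∀ i, p i ≤ P := fun i =>
    Finset.single_le_sum (fun j _ => (hpi j).le) (Finset.mem_univ i)
  have hP2 : (2:ℝ) ≤ P := le_trans (hp ⟨0, hd⟩) (hPle ⟨0, hd⟩)
  have hP1 : (1:ℝ) ≤ P := by linarith
  have hP0 : (0:ℝ) < P := by linarith
  have h2P0 : (0:ℝ) < (2:ℝ) ^ P := Real.rpow_pos_of_pos two_pos P
  have h2P1 : (1:ℝ) ≤ (2:ℝ) ^ P := by
    have h := Real.rpow_le_rpow_of_exponent_le one_le_two hP0.le
    rwa [Real.rpow_zero] at h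
  set K : ℝ := D₁ * 2 ^ P * (1 + d) with hKdef
  have hK : 0 < K := by positivity
  set g₀ : ℝ := γ * 2 ^ (-P) with hg₀def
  have h2negP : (0:ℝ) < (2:ℝ) ^ (-P) := Real.rpow_pos_of_pos two_pos _
  have hg₀ : 0 < g₀ := by positivity
  set lam₁ : ℝ := max 1 ((4 * d * K / g₀) ^ P) with hlam₁def
  set lam₂ : ℝ := max 1 ((4 * m / g₀) ^ (2:ℝ)) with hlam₂def
  have hlam₁1 : (1:ℝ) ≤ lam₁ := le_max_left _ _
  have hlam₂1 : (1:ℝ) ≤ lam₂ := le_max_left _ _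
  have hlam₁0 : (0:ℝ) < lam₁ := lt_of_lt_of_le one_pos hlam₁1
  have hlam₂0 : (0:ℝ) < lam₂ := lt_of_lt_of_le one_pos hlam₂1
  set C₁ : ℝ := γ * d + D₂ + d * lam₁ + g₀ / 4 with hC₁def
  have hC₁ : 0 < C₁ := by positivity
  refine ⟨4 * d * (K + (m:ℝ) ^ 2), C₁ + m * d * lam₂ + 1, g₀ / 2,
    by positivity, by positivity, by positivity, ?_⟩
  intro ε hε δ hδ ρ hρsm hρcs hρnn hρsupp hρint1 t ht u hu
  set S : ℝ := ∑ i, |u i| ^ p i with hSdef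
  have hS0 : 0 ≤ S :=
    Finset.sum_nonneg fun i _ => Real.rpow_nonneg (abs_nonneg _) _
  -- facts about support of ρ
  have hs_norm : ∀ s : EuclideanSpace ℝ (Fin d), ρ s ≠ 0 → ‖s‖ ≤ 1 := by
    intro s hs
    have h1 := hρsupp (Function.mem_support.mpr hs)
    rw [Metric.mem_ball, dist_zero_right] at h1
    linarith [hε.2]
  have hnear : ∀ s : EuclideanSpace ℝ (Fin d), ρ s ≠ 0 →
      Metric.infDist (u - s) {v : EuclideanSpace ℝ (Fin d) | ∀ i, 0 ≤ v i} ≤ 1 := by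
    intro s hs
    have h1 : Metric.infDist (u - s) {v : EuclideanSpace ℝ (Fin d) | ∀ i, 0 ≤ v i}
        ≤ dist (u - s) u := Metric.infDist_le_dist_of_mem hu
    rw [dist_eq_norm, sub_sub_cancel_left, norm_neg] at h1
    exact h1.trans (hs_norm s hs)
  have hsabs : ∀ s : EuclideanSpace ℝ (Fin d), ρ s ≠ 0 → ∀ i, |s i| ≤ 1 :=
    fun s hs i => (aux_abs_apply_le_norm s i).trans (hs_norm s hs)
  -- pointwise shift bound
  have hshift : ∀ i : Fin d, ∀ x y : ℝ, |y| ≤ 1 →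
      |x + y| ^ p i ≤ 2 ^ P * |x| ^ p i + 2 ^ P := by
    intro i x y hy
    have h1 : |x + y| ^ p i ≤ (|x| + |y|) ^ p i :=
      Real.rpow_le_rpow (abs_nonneg _) (abs_add_le x y) (hpi i).le
    have h2 : (|x| + |y|) ^ p i ≤ 2 ^ (p i) * (|x| ^ p i + |y| ^ p i) :=
      aux_rpow_add _ _ _ (abs_nonneg _) (abs_nonneg _) (hpi i).le
    have h3 : |y| ^ p i ≤ 1 := Real.rpow_le_one (abs_nonneg _) hy (hpi i).le
    have h4 : (2:ℝ) ^ (p i) ≤ 2 ^ P :=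
      Real.rpow_le_rpow_of_exponent_le one_le_two (hPle i)
    have h5 : (0:ℝ) ≤ |x| ^ p i := Real.rpow_nonneg (abs_nonneg _) _
    calc |x + y| ^ p i ≤ 2 ^ (p i) * (|x| ^ p i + |y| ^ p i) := h1.trans h2
      _ ≤ 2 ^ P * (|x| ^ p i + 1) := by
          apply mul_le_mul h4 (by linarith) (by positivity) (by positivity)
      _ = 2 ^ P * |x| ^ p i + 2 ^ P := by ring
  have hSub : ∀ s : EuclideanSpace ℝ (Fin d), ρ s ≠ 0 →
      ∑ i, |(u - s) i| ^ p i ≤ 2 ^ P * (S + d) := by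
    intro s hs
    have h1 : ∀ i ∈ Finset.univ, |(u - s) i| ^ p i ≤ 2 ^ P * |u i| ^ p i + 2 ^ P := by
      intro i _
      have h := hshift i (u i) (-(s i)) (by rw [abs_neg]; exact hsabs s hs i)
      simpa [PiLp.sub_apply, sub_eq_add_neg] using h
    calc ∑ i, |(u - s) i| ^ p i ≤ ∑ i : Fin d, (2 ^ P * |u i| ^ p i + 2 ^ P) :=
          Finset.sum_le_sum h1
      _ = 2 ^ P * (S + d) := by
          rw [Finset.sum_add_distrib, ← Finset.mul_sum, Finset.sum_const,
            Finset.card_univ, Fintype.card_fin, nsmul_eq_mul]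
          ring
  have hSlb : ∀ s : EuclideanSpace ℝ (Fin d), ρ s ≠ 0 →
      S ≤ 2 ^ P * ((∑ i, |(u - s) i| ^ p i) + d) := by
    intro s hs
    have h1 : ∀ i ∈ Finset.univ, |u i| ^ p i ≤ 2 ^ P * |(u - s) i| ^ p i + 2 ^ P := by
      intro i _
      have h := hshift i (u i - s i) (s i) (hsabs s hs i)
      rw [sub_add_cancel] at h
      simpa [PiLp.sub_apply] using h
    calc S ≤ ∑ i : Fin d, (2 ^ P * |(u - s) i| ^ p i + 2 ^ P) := Finset.sum_le_sum h1
      _ = 2 ^ P * ((∑ i, |(u - s) i| ^ p i) + d) := by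
          rw [Finset.sum_add_distrib, ← Finset.mul_sum, Finset.sum_const,
            Finset.card_univ, Fintype.card_fin, nsmul_eq_mul]
          ring
  have hbq : ∀ s : EuclideanSpace ℝ (Fin d), ρ s ≠ 0 →
      ∑ i, |b t (u - s) i| ^ (p i / (p i - 1)) ≤ K * (1 + S) := by
    intro s hs
    have h1 := hgrowth t ht (u - s) (hnear s hs)
    have h2 := hSub s hs
    calc ∑ i, |b t (u - s) i| ^ (p i / (p i - 1))
        ≤ D₁ * (1 + ∑ i, |(u - s) i| ^ p i) := h1
      _ ≤ D₁ * (1 + 2 ^ P * (S + d)) := by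
          apply mul_le_mul_of_nonneg_left (by linarith) hD₁.le
      _ ≤ K * (1 + S) := by
          rw [hKdef]
          nlinarith [h2P1, hS0, hd0, hD₁, mul_nonneg hd0.le hS0,
            mul_le_mul_of_nonneg_left (mul_nonneg hd0.le hS0) (le_trans zero_le_one h2P1)]
  -- per-exponent facts
  have hq0 : ∀ i, (0:ℝ) < p i / (p i - 1) := fun i =>
    div_pos (hpi i) (by linarith [hpi1 i])
  have hq2 : ∀ i, p i / (p i - 1) ≤ 2 := by
    intro i
    rw [div_le_iff₀ (by linarith [hpi1 i])]
    linarith [hp i]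
  have hθ0 : ∀ i, (0:ℝ) ≤ (p i - 1) / p i := fun i =>
    div_nonneg (by linarith [hpi1 i]) (hpi i).le
  have hθ1 : ∀ i, (p i - 1) / p i ≤ 1 := fun i => by
    rw [div_le_one (hpi i)]; linarith
  have hqθ : ∀ i, p i / (p i - 1) * ((p i - 1) / p i) = 1 := by
    intro i
    have h1 : p i ≠ 0 := (hpi i).ne'
    have h2 : p i - 1 ≠ 0 := by have := hpi1 i; intro h; linarith [sub_eq_zero.mp h]
    field_simp
  have hbabs : ∀ s : EuclideanSpace ℝ (Fin d), ρ s ≠ 0 → ∀ i,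
      |b t (u - s) i| ≤ (K * (1 + S)) ^ ((p i - 1) / p i) := by
    intro s hs i
    have h1 : |b t (u - s) i| ^ (p i / (p i - 1)) ≤ K * (1 + S) := by
      refine le_trans ?_ (hbq s hs)
      exact Finset.single_le_sum (f := fun j => |b t (u - s) j| ^ (p j / (p j - 1)))
        (fun j _ => Real.rpow_nonneg (abs_nonneg _) _) (Finset.mem_univ i)
    have h2 := Real.rpow_le_rpow (Real.rpow_nonneg (abs_nonneg _) _) h1 (hθ0 i)
    rwa [← Real.rpow_mul (abs_nonneg _), hqθ i, Real.rpow_one] at h2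
  -- integrability
  have hintb : ∀ i, Integrable (fun s => ρ s * b t (u - s) i) :=
    fun i => aux_integrable ρ hρsm.continuous hρcs _ (aux_cont b hbcont ht u i)
  have hρL1 : Integrable ρ := hρsm.continuous.integrable_of_hasCompactSupport hρcs
  have hI : ∀ i, |∫ s, ρ s * b t (u - s) i| ≤ (K * (1 + S)) ^ ((p i - 1) / p i) := by
    intro i
    have hB0 : (0:ℝ) ≤ (K * (1 + S)) ^ ((p i - 1) / p i) :=
      Real.rpow_nonneg (by positivity) _
    have h1 : |∫ s, ρ s * b t (u - s) i| ≤ ∫ s, |ρ s * b t (u - s) i| := by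
      have := norm_integral_le_integral_norm (μ := volume) (fun s => ρ s * b t (u - s) i)
      simp only [Real.norm_eq_abs] at this
      exact this
    have h2 : ∫ s, |ρ s * b t (u - s) i|
        ≤ ∫ s, ρ s * (K * (1 + S)) ^ ((p i - 1) / p i) := by
      apply integral_mono (hintb i).abs (hρL1.mul_const _)
      intro s
      show |ρ s * b t (u - s) i| ≤ ρ s * (K * (1 + S)) ^ ((p i - 1) / p i)
      rcases eq_or_ne (ρ s) 0 with h | h
      · simp [h]
      · rw [abs_mul, abs_of_nonneg (hρnn s)]
        exact mul_le_mul_of_nonneg_left (hbabs s h i) (hρnn s)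
    have h3 : ∫ s, ρ s * (K * (1 + S)) ^ ((p i - 1) / p i)
        = (K * (1 + S)) ^ ((p i - 1) / p i) := by
      rw [integral_mul_const, hρint1, one_mul]
    linarith
  constructor
  · -- growth
    have key : ∀ i, |(∫ s, ρ s * b t (u - s) i) - (m:ℝ) * δ| ^ (p i / (p i - 1))
        ≤ 4 * (K * (1 + S) + (m:ℝ) ^ 2) := by
      intro i
      have hB0 : (0:ℝ) ≤ (K * (1 + S)) ^ ((p i - 1) / p i) :=
        Real.rpow_nonneg (by positivity) _
      have h1 : |(∫ s, ρ s * b t (u - s) i) - (m:ℝ) * δ|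
          ≤ (K * (1 + S)) ^ ((p i - 1) / p i) + m := by
        have h2 := hI i
        have h3 : |(∫ s, ρ s * b t (u - s) i) - (m:ℝ) * δ|
            ≤ |∫ s, ρ s * b t (u - s) i| + |(m:ℝ) * δ| := abs_sub _ _
        have h4 : |(m:ℝ) * δ| ≤ m := by
          rw [abs_of_nonneg (mul_nonneg m.cast_nonneg hδ.1.le)]
          nlinarith [hδ.2, hm0]
        linarith
      have h5 : |(∫ s, ρ s * b t (u - s) i) - (m:ℝ) * δ| ^ (p i / (p i - 1))
          ≤ ((K * (1 + S)) ^ ((p i - 1) / p i) + m) ^ (p i / (p i - 1)) :=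
        Real.rpow_le_rpow (abs_nonneg _) h1 (hq0 i).le
      have h6 := aux_rpow_add ((K * (1 + S)) ^ ((p i - 1) / p i)) m (p i / (p i - 1))
        hB0 (by positivity) (hq0 i).le
      have e1 : ((K * (1 + S)) ^ ((p i - 1) / p i)) ^ (p i / (p i - 1)) = K * (1 + S) := by
        rw [← Real.rpow_mul (by positivity)]
        rw [show (p i - 1) / p i * (p i / (p i - 1)) = p i / (p i - 1) * ((p i - 1) / p i) by ring]
        rw [hqθ i, Real.rpow_one]
      have e2 : (m:ℝ) ^ (p i / (p i - 1)) ≤ (m:ℝ) ^ (2:ℝ) :=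
        Real.rpow_le_rpow_of_exponent_le hm1 (hq2 i)
      have e3 : (m:ℝ) ^ (2:ℝ) = (m:ℝ) ^ 2 := by
        rw [show (2:ℝ) = ((2:ℕ):ℝ) by norm_num, Real.rpow_natCast]
      have e4 : (2:ℝ) ^ (p i / (p i - 1)) ≤ 4 := by
        have h7 := Real.rpow_le_rpow_of_exponent_le one_le_two (hq2 i)
        rwa [show (2:ℝ) ^ (2:ℝ) = 4 by
          rw [show (2:ℝ) = ((2:ℕ):ℝ) by norm_num, Real.rpow_natCast]; norm_num] at h7
      have h8 : (0:ℝ) ≤ ((K * (1 + S)) ^ ((p i - 1) / p i)) ^ (p i / (p i - 1))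
          + (m:ℝ) ^ (p i / (p i - 1)) := by positivity
      have h9 : (0:ℝ) ≤ (2:ℝ) ^ (p i / (p i - 1)) := by positivity
      have h10 : ((K * (1 + S)) ^ ((p i - 1) / p i) + (m:ℝ)) ^ (p i / (p i - 1))
          ≤ 4 * (((K * (1 + S)) ^ ((p i - 1) / p i)) ^ (p i / (p i - 1))
              + (m:ℝ) ^ (p i / (p i - 1))) :=
        h6.trans (mul_le_mul_of_nonneg_right e4 h8)
      rw [e1] at h10
      rw [e3] at e2
      calc |(∫ s, ρ s * b t (u - s) i) - (m:ℝ) * δ| ^ (p i / (p i - 1))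
          ≤ ((K * (1 + S)) ^ ((p i - 1) / p i) + (m:ℝ)) ^ (p i / (p i - 1)) := h5
        _ ≤ 4 * (K * (1 + S) + (m:ℝ) ^ (p i / (p i - 1))) := h10
        _ ≤ 4 * (K * (1 + S) + (m:ℝ) ^ 2) := by linarith
    calc ∑ i, |(∫ s, ρ s * b t (u - s) i) - (m:ℝ) * δ| ^ (p i / (p i - 1))
        ≤ ∑ _i : Fin d, 4 * (K * (1 + S) + (m:ℝ) ^ 2) :=
          Finset.sum_le_sum (fun i _ => key i)
      _ = d * (4 * (K * (1 + S) + (m:ℝ) ^ 2)) := by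
          rw [Finset.sum_const, Finset.card_univ, Fintype.card_fin, nsmul_eq_mul]
      _ ≤ 4 * d * (K + (m:ℝ) ^ 2) * (1 + S) := by
          nlinarith [hS0, hK, hd0, sq_nonneg (m:ℝ), mul_nonneg hd0.le hS0,
            mul_nonneg (mul_nonneg hd0.le (sq_nonneg (m:ℝ))) hS0]
  · -- dissipativity
    set g : EuclideanSpace ℝ (Fin d) → ℝ := fun s => ∑ i, b t (u - s) i * u i with hgdef
    have hgcont : Continuous g :=
      continuous_finset_sum _ (fun i _ => (aux_cont b hbcont ht u i).mul continuous_const)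
    have hsum_eq : ∑ i, ((∫ s, ρ s * b t (u - s) i) - (m:ℝ) * δ) * u i
        = (∫ s, ρ s * g s) - (m:ℝ) * δ * ∑ i, u i := by
      have h1 : ∀ i : Fin d, ((∫ s, ρ s * b t (u - s) i) - (m:ℝ) * δ) * u i
          = (∫ s, ρ s * b t (u - s) i * u i) - (m:ℝ) * δ * u i := by
        intro i
        rw [sub_mul, ← integral_mul_const]
      rw [Finset.sum_congr rfl (fun i _ => h1 i), Finset.sum_sub_distrib]
      congr 1
      · rw [← integral_finset_sum _ (fun i _ => (hintb i).mul_const (u i))]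
        congr 1
        funext s
        rw [hgdef, Finset.mul_sum]
        exact Finset.sum_congr rfl (fun i _ => by ring)
      · rw [Finset.mul_sum]
    -- pointwise lower bound on g
    have hglb : ∀ s : EuclideanSpace ℝ (Fin d), ρ s ≠ 0 → 3 * g₀ / 4 * S - C₁ ≤ g s := by
      intro s hs
      have hdisspt := hdiss t ht (u - s) (hnear s hs)
      have hsplit : g s = (∑ i, b t (u - s) i * (u - s) i) + ∑ i, b t (u - s) i * s i := by
        rw [hgdef, ← Finset.sum_add_distrib]
        refine Finset.sum_congr rfl (fun i _ => ?_)
        simp only [PiLp.sub_apply]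
        ring
      have hT0 : (0:ℝ) ≤ ∑ i, |(u - s) i| ^ p i :=
        Finset.sum_nonneg fun i _ => Real.rpow_nonneg (abs_nonneg _) _
      have hTlb : 2 ^ (-P) * S - d ≤ ∑ i, |(u - s) i| ^ p i := by
        have h1 := hSlb s hs
        rw [Real.rpow_neg (by norm_num : (0:ℝ) ≤ 2)]
        have h2 : S / 2 ^ P ≤ (∑ i, |(u - s) i| ^ p i) + d := by
          rw [div_le_iff₀ h2P0]
          nlinarith [h1]
        have h3 : ((2:ℝ) ^ P)⁻¹ * S = S / 2 ^ P := by ring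
        linarith [h3.le, h3.ge]
      -- bound the second sum
      have hlam₁inv : lam₁ ^ (-P⁻¹) ≤ (4 * d * K / g₀)⁻¹ :=
        aux_lam_bound _ _ _ (by positivity) hP1 le_rfl
      have hBi : ∀ i : Fin d, |b t (u - s) i * s i|
          ≤ lam₁ + lam₁ ^ (-P⁻¹) * (K * (1 + S)) := by
        intro i
        have h1 : |b t (u - s) i * s i| ≤ |b t (u - s) i| := by
          rw [abs_mul]
          exact mul_le_of_le_one_right (abs_nonneg _) (hsabs s hs i)
        have h2 := hbabs s hs i
        have h3 : (K * (1 + S)) ^ ((p i - 1) / p i)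
            ≤ lam₁ ^ ((p i - 1) / p i) + lam₁ ^ ((p i - 1) / p i - 1) * (K * (1 + S)) :=
          aux_young _ _ _ (by positivity) (hθ0 i) (hθ1 i) hlam₁0
        have h4 : lam₁ ^ ((p i - 1) / p i) ≤ lam₁ := by
          have := Real.rpow_le_rpow_of_exponent_le hlam₁1 (hθ1 i)
          rwa [Real.rpow_one] at this
        have h5 : lam₁ ^ ((p i - 1) / p i - 1) ≤ lam₁ ^ (-P⁻¹) := by
          apply Real.rpow_le_rpow_of_exponent_le hlam₁1
          have hne : p i ≠ 0 := (hpi i).ne'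
          have e : (p i - 1) / p i - 1 = -(p i)⁻¹ := by
            field_simp
            ring
          rw [e, neg_le_neg_iff]
          exact inv_anti₀ (hpi i) (hPle i)
        have h6 : lam₁ ^ ((p i - 1) / p i - 1) * (K * (1 + S))
            ≤ lam₁ ^ (-P⁻¹) * (K * (1 + S)) :=
          mul_le_mul_of_nonneg_right h5 (by positivity)
        linarith
      have hBsum : |∑ i, b t (u - s) i * s i| ≤ d * lam₁ + g₀ / 4 * (1 + S) := by
        have h1 : |∑ i, b t (u - s) i * s i| ≤ ∑ i, |b t (u - s) i * s i| :=
          Finset.abs_sum_le_sum_abs _ _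
        have h2 : ∑ i, |b t (u - s) i * s i|
            ≤ ∑ _i : Fin d, (lam₁ + lam₁ ^ (-P⁻¹) * (K * (1 + S))) :=
          Finset.sum_le_sum (fun i _ => hBi i)
        rw [Finset.sum_const, Finset.card_univ, Fintype.card_fin, nsmul_eq_mul] at h2
        have h3 : (d:ℝ) * (lam₁ ^ (-P⁻¹) * (K * (1 + S)))
            ≤ (d:ℝ) * ((4 * d * K / g₀)⁻¹ * (K * (1 + S))) := by
          apply mul_le_mul_of_nonneg_left _ hd0.le
          exact mul_le_mul_of_nonneg_right hlam₁inv (by positivity)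
        have h4 : (d:ℝ) * ((4 * d * K / g₀)⁻¹ * (K * (1 + S))) = g₀ / 4 * (1 + S) := by
          field_simp
        linarith [h1, h2, h3, h4]
      have hmain : γ * (∑ i, |(u - s) i| ^ p i) - D₂ ≤ ∑ i, b t (u - s) i * (u - s) i :=
        hdisspt
      have hγT : γ * (2 ^ (-P) * S - d) ≤ γ * ∑ i, |(u - s) i| ^ p i :=
        mul_le_mul_of_nonneg_left hTlb hγ.le
      have hneg : -(d * lam₁ + g₀ / 4 * (1 + S)) ≤ ∑ i, b t (u - s) i * s i :=
        neg_le_of_abs_le hBsum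
      have he : γ * (2 ^ (-P) * S) = g₀ * S := by rw [hg₀def]; ring
      rw [hsplit, hC₁def]
      nlinarith [hmain, hγT, hneg, he]
    -- integral lower bound
    have hIg : 3 * g₀ / 4 * S - C₁ ≤ ∫ s, ρ s * g s := by
      have hint_g : Integrable (fun s => ρ s * g s) :=
        aux_integrable ρ hρsm.continuous hρcs g hgcont
      have h1 : ∫ s, ρ s * (3 * g₀ / 4 * S - C₁) ≤ ∫ s, ρ s * g s := by
        apply integral_mono (hρL1.mul_const _) hint_g
        intro s
        show ρ s * (3 * g₀ / 4 * S - C₁) ≤ ρ s * g s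
        rcases eq_or_ne (ρ s) 0 with h | h
        · simp [h]
        · exact mul_le_mul_of_nonneg_left (hglb s h) (hρnn s)
      rwa [integral_mul_const, hρint1, one_mul] at h1
    -- bound on m δ ∑ u
    have hlam₂inv : lam₂ ^ (-(2:ℝ)⁻¹) ≤ (4 * m / g₀)⁻¹ :=
      aux_lam_bound _ _ _ (by positivity) one_le_two le_rfl
    have hui : ∀ i : Fin d, u i ≤ lam₂ + lam₂ ^ (-(2:ℝ)⁻¹) * |u i| ^ p i := by
      intro i
      have h1 := aux_young (|u i| ^ p i) (p i)⁻¹ lam₂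
        (Real.rpow_nonneg (abs_nonneg _) _) (inv_nonneg.mpr (hpi i).le)
        (by rw [inv_le_one_iff₀]; right; linarith [hpi1 i]) hlam₂0
      have e : (|u i| ^ p i) ^ (p i)⁻¹ = u i := by
        rw [← Real.rpow_mul (abs_nonneg _), mul_inv_cancel₀ (hpi i).ne',
          Real.rpow_one, abs_of_nonneg (hu i)]
      rw [e] at h1
      have h4 : lam₂ ^ ((p i)⁻¹) ≤ lam₂ := by
        have h5 : (p i)⁻¹ ≤ 1 := by rw [inv_le_one_iff₀]; right; linarith [hpi1 i]
        have := Real.rpow_le_rpow_of_exponent_le hlam₂1 h5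
        rwa [Real.rpow_one] at this
      have h6 : lam₂ ^ ((p i)⁻¹ - 1) ≤ lam₂ ^ (-(2:ℝ)⁻¹) := by
        apply Real.rpow_le_rpow_of_exponent_le hlam₂1
        have h7 : (p i)⁻¹ ≤ (2:ℝ)⁻¹ := inv_anti₀ two_pos (hp i)
        linarith
      have h8 : lam₂ ^ ((p i)⁻¹ - 1) * (|u i| ^ p i)
          ≤ lam₂ ^ (-(2:ℝ)⁻¹) * (|u i| ^ p i) :=
        mul_le_mul_of_nonneg_right h6 (Real.rpow_nonneg (abs_nonneg _) _)
      linarith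
    have hsumu : (m:ℝ) * δ * (∑ i, u i) ≤ g₀ / 4 * S + m * d * lam₂ := by
      have h1 : ∑ i, u i ≤ ∑ i : Fin d, (lam₂ + lam₂ ^ (-(2:ℝ)⁻¹) * |u i| ^ p i) :=
        Finset.sum_le_sum (fun i _ => hui i)
      have h2 : ∑ i : Fin d, (lam₂ + lam₂ ^ (-(2:ℝ)⁻¹) * |u i| ^ p i)
          = d * lam₂ + lam₂ ^ (-(2:ℝ)⁻¹) * S := by
        rw [Finset.sum_add_distrib, ← Finset.mul_sum, Finset.sum_const,
          Finset.card_univ, Fintype.card_fin, nsmul_eq_mul]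
      have hu0 : (0:ℝ) ≤ ∑ i, u i := Finset.sum_nonneg (fun i _ => hu i)
      have h3 : (m:ℝ) * δ * (∑ i, u i) ≤ (m:ℝ) * (∑ i, u i) := by
        nlinarith [mul_nonneg (mul_nonneg hm0.le hu0) (sub_nonneg.mpr hδ.2.le)]
      have h4 : (m:ℝ) * (∑ i, u i) ≤ (m:ℝ) * (d * lam₂ + lam₂ ^ (-(2:ℝ)⁻¹) * S) := by
        apply mul_le_mul_of_nonneg_left _ hm0.le
        linarith [h1, h2.le]
      have h5 : (m:ℝ) * (lam₂ ^ (-(2:ℝ)⁻¹) * S) ≤ (m:ℝ) * ((4 * m / g₀)⁻¹ * S) := by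
        apply mul_le_mul_of_nonneg_left _ hm0.le
        exact mul_le_mul_of_nonneg_right hlam₂inv hS0
      have h6 : (m:ℝ) * ((4 * m / g₀)⁻¹ * S) = g₀ / 4 * S := by
        field_simp
      linarith [h3, h4, h5, h6]
    rw [hsum_eq]
    linarith [hIg, hsumu]
end

section
/- Let f : [τ,T]×ℝ^d → ℝ^d be jointly continuous and let R ≥ 1. Suppose f is quasimonotone within radius R, i.e., f^i(t,u) ≥ f^i(t,v) for every i, every t ∈ [τ,T] and every u, v ∈ ℝ^d such that u^i = v^i, u^j ≤ v^j for all j ≠ i, and |u| ≤ R, |v| ≤ R. Let 0 < ε < 1, let ρ_ε be a mollifier, and define F(t,u) = ∫_{ℝ^d} ρ_ε(s) f(t, u−s) ds. Then F is quasimonotone within radius R − 1: for every i, every t ∈ [τ,T] and every u, v ∈ ℝ^d with u^i = v^i, u^j ≤ v^j for all j ≠ i, and |u| ≤ R−1, |v| ≤ R−1, one has F^i(t,u) ≥ F^i(t,v). -/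
open MeasureTheory

/-- mollification preserves quasimonotonicity, shrinking the radius by `1`:
if `f^i(t,u) ≥ f^i(t,v)` whenever `u^i = v^i`, `u^j ≤ v^j` (`j ≠ i`) and `|u|,|v| ≤ R`,
then `F(t,u) = ∫ ρ_ε(s) f(t,u−s) ds` satisfies the same property within radius `R − 1`. -/
theorem mollification_preserves_quasimonotone
    (d : ℕ) (hd : 1 ≤ d) (τ T : ℝ) (hτT : τ < T)
    (f : ℝ → EuclideanSpace ℝ (Fin d) → EuclideanSpace ℝ (Fin d))
    (hfcont : ContinuousOn (Function.uncurry f) (Set.Icc τ T ×ˢ Set.univ))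
    (R : ℝ) (hR : 1 ≤ R)
    (hquasi : ∀ (i : Fin d), ∀ t ∈ Set.Icc τ T, ∀ u v : EuclideanSpace ℝ (Fin d),
      u i = v i → (∀ j, j ≠ i → u j ≤ v j) → ‖u‖ ≤ R → ‖v‖ ≤ R →
      f t v i ≤ f t u i)
    (ε : ℝ) (hε0 : 0 < ε) (hε1 : ε < 1)
    (ρ : EuclideanSpace ℝ (Fin d) → ℝ)
    (hρsmooth : ContDiff ℝ (⊤ : ℕ∞) ρ) (hρsupp : HasCompactSupport ρ)
    (hρnonneg : ∀ s, 0 ≤ ρ s) (hρball : Function.support ρ ⊆ Metric.ball 0 ε)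
    (hρint : ∫ s, ρ s = 1) :
    ∀ (i : Fin d), ∀ t ∈ Set.Icc τ T, ∀ u v : EuclideanSpace ℝ (Fin d),
      u i = v i → (∀ j, j ≠ i → u j ≤ v j) → ‖u‖ ≤ R - 1 → ‖v‖ ≤ R - 1 →
      (∫ s, ρ s * f t (v - s) i) ≤ ∫ s, ρ s * f t (u - s) i := by
  intro i t ht u v huvi huvj hu hv
  -- continuity of x ↦ f t x
  have hft : Continuous fun x : EuclideanSpace ℝ (Fin d) => f t x := by
    have h : ContinuousOn (fun x : EuclideanSpace ℝ (Fin d) => f t x) Set.univ :=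
      ContinuousOn.comp (g := Function.uncurry f) hfcont
        ((continuous_const.prodMk continuous_id).continuousOn)
        (fun x _ => ⟨ht, Set.mem_univ x⟩)
    exact continuousOn_univ.mp h
  have key : ∀ w : EuclideanSpace ℝ (Fin d),
      Integrable (fun s => ρ s * f t (w - s) i) := by
    intro w
    apply Continuous.integrable_of_hasCompactSupport
    · exact hρsmooth.continuous.mul
        (((continuous_apply i).comp (PiLp.continuous_ofLp 2 _)).comp
          (hft.comp (continuous_const.sub continuous_id)))
    · apply HasCompactSupport.mul_right hρsupp
  apply integral_mono (key v) (key u)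
  intro s
  by_cases hs : ρ s = 0
  · simp [hs]
  · have hsmem : s ∈ Metric.ball (0 : EuclideanSpace ℝ (Fin d)) ε := hρball hs
    have hns : ‖s‖ ≤ 1 := by
      have := mem_ball_zero_iff.mp hsmem
      linarith
    have h1 : ‖u - s‖ ≤ R := by
      calc ‖u - s‖ ≤ ‖u‖ + ‖s‖ := norm_sub_le _ _
        _ ≤ R := by linarith
    have h2 : ‖v - s‖ ≤ R := by
      calc ‖v - s‖ ≤ ‖v‖ + ‖s‖ := norm_sub_le _ _
        _ ≤ R := by linarith
    have hq := hquasi i t ht (u - s) (v - s)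
      (by simp [PiLp.sub_apply, huvi])
      (fun j hj => by simpa [PiLp.sub_apply] using sub_le_sub_right (huvj j hj) (s j))
      h1 h2
    exact mul_le_mul_of_nonneg_left hq (hρnonneg s)
end

section
/- Let 0 < m < 1, 0 < r < 1 and k > 0, and define f : ℝ₊ → ℝ by f(u) = (u − 1)u^m + k u^r. Then f satisfies the growth and dissipativity conditions with exponent p = m + 2 on the positive half-line: there exist constants C₁, C₂, α > 0 such that for all u ≥ 0, |f(u)|^{(m+2)/(m+1)} ≤ C₁(1 + u^{m+2}) and f(u)·u ≥ α u^{m+2} − C₂. -/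
/-!
Both conditions follow from comparing powers of `u` with each other. Every term of `f` is
bounded by a multiple of `1 + u^{m+1}`, and raising such a bound to the power `(m+2)/(m+1)`
yields the growth condition. In `f(u)·u = u^{m+2} - u^{m+1} + k u^{r+1}` the decay term is
nonnegative and `u^{m+1}` is absorbed by half of `u^{m+2}` up to a constant.
-/

namespace Real

variable {u a b c q s C y : ℝ}

theorem rpow_le_one_add_rpow_of_le (hu : 0 ≤ u) (ha : 0 ≤ a) (hab : a ≤ b) :
    u ^ a ≤ 1 + u ^ b := by
  rcases le_total u 1 with hu1 | hu1
  · linarith [rpow_le_one hu hu1 ha, rpow_nonneg hu b]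
  · linarith [rpow_le_rpow_of_exponent_le hu1 hab]

theorem one_add_rpow_le_two_rpow_mul (hu : 0 ≤ u) (hq : 0 ≤ q) :
    (1 + u) ^ q ≤ 2 ^ q * (1 + u ^ q) := by
  rcases le_total u 1 with hu1 | hu1
  · have h : (1 + u) ^ q ≤ 2 ^ q := rpow_le_rpow (by linarith) (by linarith) hq
    nlinarith [rpow_nonneg hu q, rpow_nonneg zero_le_two q]
  · have h : (1 + u) ^ q ≤ (2 * u) ^ q := rpow_le_rpow (by linarith) (by linarith) hq
    rw [mul_rpow zero_le_two hu] at h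
    nlinarith [rpow_nonneg zero_le_two q]

theorem abs_rpow_le_of_abs_le_mul_one_add_rpow (hu : 0 ≤ u) (hC : 0 ≤ C) (hq : 0 ≤ q)
    (hy : |y| ≤ C * (1 + u ^ s)) :
    |y| ^ q ≤ (2 * C) ^ q * (1 + u ^ (s * q)) := by
  have hus : 0 ≤ u ^ s := rpow_nonneg hu s
  calc |y| ^ q ≤ (C * (1 + u ^ s)) ^ q := rpow_le_rpow (abs_nonneg y) hy hq
    _ = C ^ q * (1 + u ^ s) ^ q := mul_rpow hC (by positivity)
    _ ≤ C ^ q * (2 ^ q * (1 + (u ^ s) ^ q)) := by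
        gcongr
        exact one_add_rpow_le_two_rpow_mul hus hq
    _ = (2 * C) ^ q * (1 + u ^ (s * q)) := by
        rw [mul_rpow zero_le_two hC, rpow_mul hu]
        ring

theorem rpow_le_rpow_add_one_div_add_rpow (hu : 0 ≤ u) (ha : 0 ≤ a) (hc : 0 < c) :
    u ^ a ≤ u ^ (a + 1) / c + c ^ a := by
  rcases le_total u c with huc | huc
  · have hsmall : u ^ a ≤ c ^ a := rpow_le_rpow hu huc ha
    linarith [show 0 ≤ u ^ (a + 1) / c by positivity]
  · have hlarge : u ^ a ≤ u ^ (a + 1) / c := by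
      rw [rpow_add_one (hc.trans_le huc).ne', le_div_iff₀ hc]
      exact mul_le_mul_of_nonneg_left huc (rpow_nonneg hu a)
    linarith [rpow_nonneg hc.le a]

end Real

open Real

noncomputable def autocatalysis (m r k u : ℝ) : ℝ :=
  (u - 1) * u ^ m + k * u ^ r

section

variable {m r k u : ℝ}

theorem abs_autocatalysis_le (hu : 0 ≤ u) (hm : 0 ≤ m) (hr : 0 ≤ r) (hrm : r ≤ m + 1)
    (hk : 0 ≤ k) : |autocatalysis m r k u| ≤ (2 + k) * (1 + u ^ (m + 1)) := by
  have hum : 0 ≤ u ^ m := rpow_nonneg hu m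
  have hm1 : u ^ (m + 1) = u ^ m * u := rpow_add_one' hu (by linarith)
  have hm_le := rpow_le_one_add_rpow_of_le hu hm (by linarith : m ≤ m + 1)
  have hr_le := rpow_le_one_add_rpow_of_le hu hr hrm
  calc |autocatalysis m r k u| ≤ |(u - 1) * u ^ m| + |k * u ^ r| := abs_add_le _ _
    _ = |u - 1| * u ^ m + k * u ^ r := by
        rw [abs_mul, abs_mul, abs_of_nonneg hum, abs_of_nonneg (rpow_nonneg hu r),
          abs_of_nonneg hk]
    _ ≤ (u + 1) * u ^ m + k * u ^ r := by
        gcongr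
        exact abs_sub_le_iff.2 ⟨by linarith, by linarith⟩
    _ = u ^ (m + 1) + u ^ m + k * u ^ r := by rw [hm1]; ring
    _ ≤ (2 + k) * (1 + u ^ (m + 1)) := by nlinarith

theorem half_rpow_sub_two_rpow_le_autocatalysis_mul (hu : 0 ≤ u) (hm : 0 ≤ m) (hr : 0 ≤ r)
    (hk : 0 ≤ k) : 1 / 2 * u ^ (m + 2) - 2 ^ (m + 1) ≤ autocatalysis m r k u * u := by
  have hm1 : u ^ (m + 1) = u ^ m * u := rpow_add_one' hu (by linarith)
  have hm2 : u ^ (m + 2) = u ^ (m + 1) * u := by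
    rw [show m + 2 = m + 1 + 1 by ring]; exact rpow_add_one' hu (by linarith)
  have hr1 : u ^ (r + 1) = u ^ r * u := rpow_add_one' hu (by linarith)
  have hexpand : autocatalysis m r k u * u = u ^ (m + 2) - u ^ (m + 1) + k * u ^ (r + 1) := by
    rw [autocatalysis, hm2, hm1, hr1]; ring
  have habsorb := rpow_le_rpow_add_one_div_add_rpow hu (by linarith : 0 ≤ m + 1) two_pos
  rw [show m + 1 + 1 = m + 2 by ring] at habsorb
  have hdecay : 0 ≤ k * u ^ (r + 1) := mul_nonneg hk (rpow_nonneg hu _)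
  linarith

end

theorem autocatalysis_growth_dissipativity_general
    (m r k : ℝ) (hm0 : 0 < m) (hr0 : 0 < r) (hr1 : r < 1) (hk : 0 < k) :
    ∃ C₁ C₂ α : ℝ, 0 < C₁ ∧ 0 < C₂ ∧ 0 < α ∧
      ∀ u : ℝ, 0 ≤ u →
        (|(u - 1) * u ^ m + k * u ^ r| ^ ((m + 2) / (m + 1)) ≤ C₁ * (1 + u ^ (m + 2))) ∧
        (α * u ^ (m + 2) - C₂ ≤ ((u - 1) * u ^ m + k * u ^ r) * u) := by
  have hq : 0 ≤ (m + 2) / (m + 1) := by positivity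
  have hexp : (m + 1) * ((m + 2) / (m + 1)) = m + 2 := by field_simp
  refine ⟨(2 * (2 + k)) ^ ((m + 2) / (m + 1)), 2 ^ (m + 1), 1 / 2, by positivity, by positivity,
    by norm_num, fun u hu => ⟨?_, ?_⟩⟩
  · have hf := abs_autocatalysis_le hu hm0.le hr0.le (by linarith) hk.le
    have hgrowth := abs_rpow_le_of_abs_le_mul_one_add_rpow hu (by positivity) hq hf
    rwa [hexp] at hgrowth
  · exact half_rpow_sub_two_rpow_le_autocatalysis_mul hu hm0.le hr0.le hk.le

/-- the nonlinearity `f(u) = (u − 1)u^m + k u^r` of the model of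
fractional-order chemical autocatalysis with decay satisfies, on the positive half-line,
the growth and dissipativity conditions with exponent `p = m + 2`:
`|f(u)|^{(m+2)/(m+1)} ≤ C₁(1 + u^{m+2})` and `f(u)·u ≥ α u^{m+2} − C₂`. -/
theorem autocatalysis_growth_dissipativity
    (m r k : ℝ) (hm0 : 0 < m) (hm1 : m < 1) (hr0 : 0 < r) (hr1 : r < 1) (hk : 0 < k) :
    ∃ C₁ C₂ α : ℝ, 0 < C₁ ∧ 0 < C₂ ∧ 0 < α ∧
      ∀ u : ℝ, 0 ≤ u →
        (|(u - 1) * u ^ m + k * u ^ r| ^ ((m + 2) / (m + 1)) ≤ C₁ * (1 + u ^ (m + 2))) ∧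
        (α * u ^ (m + 2) - C₂ ≤ ((u - 1) * u ^ m + k * u ^ r) * u) :=
  autocatalysis_growth_dissipativity_general m r k hm0 hr0 hr1 hk
end
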